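/- In majority dynamics on a tree with odd degrees, if a vertex v satisfies ξ_{t+2}(v) ≠ ξ_t(v) for some time t ≥ 0, then there exists a path v = w_t, w_{t-1}, ..., w_0 of distinct vertices in the tree such that for every t' ∈ {0, 1, ..., t}, ξ_{t'+2}(w_{t'}) ≠ ξ_{t'}(w_{t'}) and ξ_{t'+2}(w_{t'}) = ξ_{t+2}(v). -/

import Mathlib

open SimpleGraph Set

variable {V : Type*}

/-- The majority-dynamics process generated by the initial opinion vector `σ`:
`ξ (t+1) v` is the sign of the sum of the opinions `ξ t` over the neighbours of `v`. -/
noncomputable def dyn (G : SimpleGraph V) (σ : V → ℤ) : ℕ → V → ℤ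
  | 0 => σ
  | t + 1 => fun v => if 0 < ∑ᶠ u ∈ G.neighborSet v, dyn G σ t u then 1 else -1

/-- `σ` is a valid vector of opinions, i.e. takes values in `{-1, 1}`. -/
def PM (σ : V → ℤ) : Prop := ∀ v, σ v = 1 ∨ σ v = -1

/-- The degree of a vertex. -/
noncomputable def degree' (G : SimpleGraph V) (v : V) : ℕ := (G.neighborSet v).ncard

/-- A leaf is a vertex of degree 1. -/
def IsLeaf (G : SimpleGraph V) (v : V) : Prop := degree' G v = 1

/-- The number of neighbours of `v` that are leaves. -/
noncomputable def leafNbrs (G : SimpleGraph V) (v : V) : ℕ := {u | G.Adj v u ∧ IsLeaf G u}.ncard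

/-- All degrees of `G` are odd. -/
def OddDegrees (G : SimpleGraph V) : Prop := ∀ v, Odd (degree' G v)

/-- `v` is `t`-stable for the process `ξ`. -/
def Stable (ξ : ℕ → V → ℤ) (v : V) (t : ℕ) : Prop :=
  ∀ s, t ≤ s → s % 2 = t % 2 → ξ (s + 2) v = ξ s v

/-
If `ξ_{s+3}(v) ≠ ξ_{s+1}(v)` then the sign of `∑_{u ~ v} ξ_{s+2}(u)` differs from that of
`∑_{u ~ v} ξ_s(u)`, so some neighbour `u` moved in the same direction: `ξ_{s+2}(u) ≠ ξ_s(u)` and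
`ξ_{s+2}(u) = ξ_{s+3}(v)`. Iterating backwards from `v` gives a walk `w_t, …, w_0`. It never
backtracks: `w_{i+2} = w_i` would force `ξ_{i+2}(w_i)` to be both the new value and not the new
value. A non-backtracking walk in a tree is a path: at the first return to an earlier vertex, the
last edge and the segment of the walk since that vertex would be two distinct paths.
-/

namespace SimpleGraph.Walk

variable {G : SimpleGraph V}

def ofSeq (w : ℕ → V) : (n : ℕ) → (∀ i < n, G.Adj (w i) (w (i + 1))) → G.Walk (w 0) (w n)
  | 0, _ => nil
  | n + 1, h => (ofSeq w n fun i hi => h i (by omega)).concat (h n (by omega))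

theorem support_ofSeq (w : ℕ → V) :
    ∀ n h, (ofSeq (G := G) w n h).support = (List.range (n + 1)).map w
  | 0, _ => rfl
  | n + 1, h => by
    rw [ofSeq, support_concat, support_ofSeq, List.range_succ (n := n + 1)]
    simp

theorem length_ofSeq (w : ℕ → V) : ∀ n h, (ofSeq (G := G) w n h).length = n
  | 0, _ => rfl
  | n + 1, h => by rw [ofSeq, length_concat, length_ofSeq]

theorem isPath_ofSeq {w : ℕ → V} {n : ℕ} (h : ∀ i < n, G.Adj (w i) (w (i + 1)))
    (hw : InjOn w (Iic n)) : (ofSeq w n h).IsPath := by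
  rw [isPath_def, support_ofSeq]
  refine List.Nodup.map_on (fun i hi j hj hij => hw ?_ ?_ hij) List.nodup_range
  · simpa [Nat.lt_succ_iff] using hi
  · simpa [Nat.lt_succ_iff] using hj

end SimpleGraph.Walk

namespace SimpleGraph.IsAcyclic

variable {G : SimpleGraph V}

theorem injOn_Iic_of_nonbacktracking (hG : G.IsAcyclic) {w : ℕ → V} {n : ℕ}
    (hadj : ∀ i < n, G.Adj (w i) (w (i + 1))) (hback : ∀ i, i + 2 ≤ n → w i ≠ w (i + 2)) :
    InjOn w (Iic n) := by
  induction n with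
  | zero => exact fun a ha b hb _ => (Nat.le_zero.1 ha).trans (Nat.le_zero.1 hb).symm
  | succ n ih =>
    have hinj : InjOn w (Iic n) :=
      ih (fun i hi => hadj i (by omega)) (fun i hi => hback i (by omega))
    rw [show Iic (n + 1) = insert (n + 1) (Iic n) from Order.Iic_succ n, injOn_insert (by simp)]
    refine ⟨hinj, ?_⟩
    rintro ⟨j, hj : j ≤ n, hwj⟩
    have hj : j + 2 ≤ n := by
      have h1 : j ≠ n := by rintro rfl; exact (hadj j (by omega)).ne hwj
      have h2 : j + 1 ≠ n := by rintro rfl; exact hback j (by omega) hwj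
      omega
    -- Two paths from `w (n + 1) = w j` to `w n`: the edge, and the segment `w j, …, w n`.
    let seg := fun k => w (j + k)
    have hseg : ∀ k < n - j, G.Adj (seg k) (seg (k + 1)) := fun k hk => hadj (j + k) (by omega)
    have hsegInj : InjOn seg (Iic (n - j)) := fun a ha b hb hab =>
      Nat.add_left_cancel (hinj (show j + a ≤ n by rw [mem_Iic] at ha; omega)
        (show j + b ≤ n by rw [mem_Iic] at hb; omega) hab)
    let p : G.Path (w (n + 1)) (w n) :=
      ⟨(Walk.ofSeq seg (n - j) hseg).copy hwj (by simp only [seg]; congr 1; omega),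
        (Walk.isPath_copy _ _ _).2 (Walk.isPath_ofSeq hseg hsegInj)⟩
    let q : G.Path (w (n + 1)) (w n) := Path.singleton (hadj n (by omega)).symm
    have hlen := congrArg (fun r : G.Path _ _ => r.1.length) ((hG.subsingleton_path _ _).elim p q)
    simp only [p, q, Walk.length_copy, Walk.length_ofSeq, Path.singleton_coe, Walk.length_cons,
      Walk.length_nil] at hlen
    omega

end SimpleGraph.IsAcyclic

section Dynamics

variable {G : SimpleGraph V} {σ : V → ℤ}

theorem dyn_succ (s : ℕ) (v : V) :
    dyn G σ (s + 1) v = if 0 < ∑ᶠ u ∈ G.neighborSet v, dyn G σ s u then 1 else -1 :=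
  rfl

theorem pm_dyn (G : SimpleGraph V) (hσ : PM σ) : ∀ s, PM (dyn G σ s)
  | 0 => hσ
  | s + 1 => fun v => by rw [dyn_succ]; split_ifs <;> simp

theorem dyn_succ_of_infinite (hσ : PM σ) (s : ℕ) {v : V} (hv : (G.neighborSet v).Infinite) :
    dyn G σ (s + 1) v = -1 := by
  -- `∑ᶠ` of a function with infinite support is `0`.
  have hsupp : Function.support (dyn G σ s) = univ := by
    ext u
    rcases pm_dyn G hσ s u with hu | hu <;> simp [hu]
  rw [dyn_succ, finsum_mem_eq_zero_of_infinite (by rwa [hsupp, inter_univ]), if_neg (lt_irrefl 0)]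

theorem dyn_succ_eq_ite_sum {v : V} (hv : (G.neighborSet v).Finite) (s : ℕ) :
    dyn G σ (s + 1) v = if 0 < ∑ u ∈ hv.toFinset, dyn G σ s u then 1 else -1 := by
  rw [dyn_succ, finsum_mem_eq_finite_toFinset_sum _ hv]

theorem exists_adj_flip (hσ : PM σ) {s : ℕ} {v : V}
    (h : dyn G σ (s + 3) v ≠ dyn G σ (s + 1) v) :
    ∃ u, G.Adj v u ∧ dyn G σ (s + 2) u ≠ dyn G σ s u ∧
      dyn G σ (s + 2) u = dyn G σ (s + 3) v := by
  have hv : (G.neighborSet v).Finite := by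
    by_contra hinf
    exact h ((dyn_succ_of_infinite hσ _ hinf).trans (dyn_succ_of_infinite hσ _ hinf).symm)
  rw [dyn_succ_eq_ite_sum hv (s + 2), dyn_succ_eq_ite_sum hv s] at h
  rw [dyn_succ_eq_ite_sum hv (s + 2)]
  have hmem (u : V) (hu : u ∈ hv.toFinset) : G.Adj v u := by simpa using hu
  split_ifs at h ⊢ with h₂ h₀ h₀
  · exact absurd rfl h
  · obtain ⟨u, hu, hlt⟩ := Finset.exists_lt_of_sum_lt (s := hv.toFinset)
      (f := dyn G σ s) (g := dyn G σ (s + 2)) (by omega)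
    refine ⟨u, hmem u hu, ?_⟩
    rcases pm_dyn G hσ (s + 2) u with h₂u | h₂u <;> rcases pm_dyn G hσ s u with h₀u | h₀u <;> omega
  · obtain ⟨u, hu, hlt⟩ := Finset.exists_lt_of_sum_lt (s := hv.toFinset)
      (f := dyn G σ (s + 2)) (g := dyn G σ s) (by omega)
    refine ⟨u, hmem u hu, ?_⟩
    rcases pm_dyn G hσ (s + 2) u with h₂u | h₂u <;> rcases pm_dyn G hσ s u with h₀u | h₀u <;> omega
  · exact absurd rfl h

theorem exists_flip_chain (hσ : PM σ) : ∀ {t : ℕ} {v : V}, dyn G σ (t + 2) v ≠ dyn G σ t v →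
    ∃ w : ℕ → V, w t = v ∧ (∀ i < t, G.Adj (w i) (w (i + 1))) ∧
      ∀ i ≤ t, dyn G σ (i + 2) (w i) ≠ dyn G σ i (w i) ∧
        dyn G σ (i + 2) (w i) = dyn G σ (t + 2) v
  | 0, v, h => ⟨fun _ => v, rfl, by omega, fun i hi => by
      obtain rfl := Nat.le_zero.1 hi
      exact ⟨h, rfl⟩⟩
  | t + 1, v, h => by
    obtain ⟨u, hvu, hu, hxu⟩ := exists_adj_flip hσ h
    obtain ⟨w, rfl, hadj, hflip⟩ := exists_flip_chain hσ hu
    refine ⟨Function.update w (t + 1) v, by simp, fun i hi => ?_, fun i hi => ?_⟩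
    · rcases (show i < t ∨ i = t by omega) with hi | rfl
      · simpa [Function.update_apply, show i ≠ t + 1 by omega, hi.ne]
          using hadj i hi
      · simpa using hvu.symm
    · rcases (show i ≤ t ∨ i = t + 1 by omega) with hi | rfl
      · simpa [Function.update_apply, show i ≠ t + 1 by omega, ← hxu] using hflip i hi
      · simpa using h

end Dynamics

theorem opinion_travels_general (G : SimpleGraph V) (hT : G.IsTree)
    (σ : V → ℤ) (hσ : PM σ) (v : V) (t : ℕ)
    (h : dyn G σ (t + 2) v ≠ dyn G σ t v) :
    ∃ w : ℕ → V, w t = v ∧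
      (∀ i j, i ≤ t → j ≤ t → w i = w j → i = j) ∧
      (∀ i, i < t → G.Adj (w i) (w (i + 1))) ∧
      (∀ t', t' ≤ t → dyn G σ (t' + 2) (w t') ≠ dyn G σ t' (w t') ∧
        dyn G σ (t' + 2) (w t') = dyn G σ (t + 2) v) := by
  obtain ⟨w, hwt, hadj, hflip⟩ := exists_flip_chain hσ h
  have hback : ∀ i, i + 2 ≤ t → w i ≠ w (i + 2) := by
    intro i hi hw
    have hnew := (hflip (i + 2) hi).1
    rw [(hflip (i + 2) hi).2, ← hw, (hflip i (by omega)).2] at hnew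
    exact hnew rfl
  exact ⟨w, hwt, fun i j hi hj => hT.isAcyclic.injOn_Iic_of_nonbacktracking hadj hback hi hj,
    hadj, hflip⟩

/-- If a vertex changes its opinion at time `t+2`, the change travelled to it
along a path `w_t, …, w_0` of distinct vertices: each `w_{t'}` changes its opinion (to the
same value `ξ_{t+2}(v)`) at time `t' + 2`. -/
theorem opinion_travels [Fintype V] (G : SimpleGraph V) (hT : G.IsTree)
    (hodd : OddDegrees G) (σ : V → ℤ) (hσ : PM σ) (v : V) (t : ℕ)
    (h : dyn G σ (t + 2) v ≠ dyn G σ t v) :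
    ∃ w : ℕ → V, w t = v ∧
      (∀ i j, i ≤ t → j ≤ t → w i = w j → i = j) ∧
      (∀ i, i < t → G.Adj (w i) (w (i + 1))) ∧
      (∀ t', t' ≤ t → dyn G σ (t' + 2) (w t') ≠ dyn G σ t' (w t') ∧
        dyn G σ (t' + 2) (w t') = dyn G σ (t + 2) v) :=
  opinion_travels_general G hT σ hσ v t h
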